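/- Fix d : ℕ with d ≥ 2, distinct indices i, j ∈ Fin d, and a vector w : Fin d → Bool. Let Train be the set of the four vectors that agree with w on every coordinate outside {i, j} and realize all four combinations of Boolean values at coordinates i and j; let Good = {v ∈ Train : v i = v j} (two vectors) and Bad = Train \ Good (two vectors). Then for every index x ∈ Fin d, the one-step information gain IG(Train, x) equals 0, whereas the 2-look-ahead information gain of i (and likewise of j) is strictly positive and equals H(Train) = log 2: the split on i followed by splits of both children on j perfectly classifies the set. -/
import Mathlib


/-- The entropy `H(ℓ)` of a finite set `ℓ` with respect to the positive class `Good`: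
with `p(ℓ) = |ℓ ∩ Good| / |ℓ|`, `H(ℓ) = −p·log p − (1−p)·log(1−p)` (natural logarithm;
`Real.log 0 = 0` gives the convention `0·log 0 = 0`, and `H(∅) = 0`). -/
noncomputable def entH {d : ℕ} (Good ℓ : Finset (Fin d → Bool)) : ℝ :=
  -((((ℓ ∩ Good).card : ℝ) / ℓ.card) * Real.log (((ℓ ∩ Good).card : ℝ) / ℓ.card))
  - ((1 - ((ℓ ∩ Good).card : ℝ) / ℓ.card) * Real.log (1 - ((ℓ ∩ Good).card : ℝ) / ℓ.card))

/-- The `k`-step weighted entropy: `WE^0(ℓ, i) = |ℓ|·H(ℓ)` and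
`WE^{k+1}(ℓ, i) = min over i₀ i₁ of WE^k(ℓ[i=0], i₀) + WE^k(ℓ[i=1], i₁)`. -/
noncomputable def WE {d : ℕ} (Good : Finset (Fin d → Bool)) :
    ℕ → Finset (Fin d → Bool) → Fin d → ℝ
  | 0, ℓ, _ => (ℓ.card : ℝ) * entH Good ℓ
  | k + 1, ℓ, i => ⨅ i₀ : Fin d, ⨅ i₁ : Fin d,
      (WE Good k (ℓ.filter fun v => v i = false) i₀ +
       WE Good k (ℓ.filter fun v => v i = true) i₁)

/-- The `k`-look-ahead information gain `IG^k(ℓ, i) = H(ℓ) − WE^k(ℓ, i)/|ℓ|`. -/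
noncomputable def IGk {d : ℕ} (Good : Finset (Fin d → Bool)) (k : ℕ)
    (ℓ : Finset (Fin d → Bool)) (i : Fin d) : ℝ :=
  entH Good ℓ - WE Good k ℓ i / ℓ.card

/-- The standard (ID3) information gain
`IG(ℓ, i) = H(ℓ) − (|ℓ[i=0]|/|ℓ|)·H(ℓ[i=0]) − (|ℓ[i=1]|/|ℓ|)·H(ℓ[i=1])`. -/
noncomputable def IG {d : ℕ} (Good : Finset (Fin d → Bool))
    (ℓ : Finset (Fin d → Bool)) (i : Fin d) : ℝ :=
  entH Good ℓ
  - ((ℓ.filter fun v => v i = false).card : ℝ) / ℓ.card * entH Good (ℓ.filter fun v => v i = false)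
  - ((ℓ.filter fun v => v i = true).card : ℝ) / ℓ.card * entH Good (ℓ.filter fun v => v i = true)

lemma entH_nonneg {d : ℕ} (Good ℓ : Finset (Fin d → Bool)) : 0 ≤ entH Good ℓ := by
  set p : ℝ := ((ℓ ∩ Good).card : ℝ) / ℓ.card with hp
  have hp0 : (0:ℝ) ≤ p := div_nonneg (by positivity) (by positivity)
  have hp1 : p ≤ 1 := by
    rcases Nat.eq_zero_or_pos ℓ.card with h | h
    · simp [hp, h]
    · rw [hp, div_le_one (by exact_mod_cast h)]
      exact_mod_cast Finset.card_le_card Finset.inter_subset_left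
  have h1 := Real.negMulLog_nonneg hp0 hp1
  have h2 := Real.negMulLog_nonneg (by linarith) (by linarith : 1 - p ≤ 1)
  rw [Real.negMulLog] at h1 h2
  unfold entH
  rw [← hp]
  nlinarith

lemma WE_nonneg {d : ℕ} (hd : 0 < d) (Good : Finset (Fin d → Bool)) :
    ∀ k (ℓ : Finset (Fin d → Bool)) (i : Fin d), 0 ≤ WE Good k ℓ i := by
  have : Nonempty (Fin d) := ⟨⟨0, hd⟩⟩
  intro k
  induction k with
  | zero => intro ℓ i; exact mul_nonneg (Nat.cast_nonneg _) (entH_nonneg _ _)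
  | succ k ih =>
    intro ℓ i
    rw [WE]
    exact le_ciInf fun i₀ => le_ciInf fun i₁ => add_nonneg (ih _ _) (ih _ _)

lemma WE_le {d : ℕ} (hd : 0 < d) (Good : Finset (Fin d → Bool)) (k : ℕ)
    (ℓ : Finset (Fin d → Bool)) (i i₀ i₁ : Fin d) :
    WE Good (k+1) ℓ i ≤ WE Good k (ℓ.filter fun v => v i = false) i₀ +
      WE Good k (ℓ.filter fun v => v i = true) i₁ := by
  have : Nonempty (Fin d) := ⟨⟨0, hd⟩⟩
  rw [WE]
  exact le_trans (ciInf_le (Set.Finite.bddBelow (Set.finite_range _)) i₀)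
    (ciInf_le (Set.Finite.bddBelow (Set.finite_range _)) i₁)

lemma entH_half {d : ℕ} (Good ℓ : Finset (Fin d → Bool))
    (h : ((ℓ ∩ Good).card : ℝ) / ℓ.card = 1/2) : entH Good ℓ = Real.log 2 := by
  have h2 : Real.log (1/2 : ℝ) = -Real.log 2 := by rw [one_div, Real.log_inv]
  unfold entH
  rw [h]
  norm_num [h2]
  ring

lemma entH_inter_empty {d : ℕ} (Good ℓ : Finset (Fin d → Bool)) (h : ℓ ∩ Good = ∅) :
    entH Good ℓ = 0 := by
  simp [entH, h]

lemma entH_inter_self {d : ℕ} (Good ℓ : Finset (Fin d → Bool)) (h : ℓ ∩ Good = ℓ)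
    (h0 : ℓ.card ≠ 0) : entH Good ℓ = 0 := by
  unfold entH
  rw [h, div_self (by exact_mod_cast h0)]
  simp

/-- The XOR-like example: `Train` consists of the four vectors agreeing with `w` outside
`{i, j}` and realizing all combinations at `i, j`; `Good` are those with `v i = v j`.
Every one-step information gain is `0`, whereas the 2-look-ahead information gain of `i`
(and likewise of `j`) is strictly positive and equals `H(Train) = log 2`. -/
theorem xor_example_needs_lookahead
    (d : ℕ) (hd : 2 ≤ d) (i j : Fin d) (hij : i ≠ j) (w : Fin d → Bool)
    (Train Good Bad : Finset (Fin d → Bool))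
    (hTrain : Train = {Function.update (Function.update w i false) j false,
                       Function.update (Function.update w i false) j true,
                       Function.update (Function.update w i true) j false,
                       Function.update (Function.update w i true) j true})
    (hGood : Good = Train.filter (fun v => v i = v j))
    (hBad : Bad = Train \ Good) :
    (∀ x : Fin d, IG Good Train x = 0) ∧
    0 < IGk Good 2 Train i ∧ 0 < IGk Good 2 Train j ∧
    IGk Good 2 Train i = entH Good Train ∧
    IGk Good 2 Train j = entH Good Train ∧
    entH Good Train = Real.log 2 := by
  have hdpos : 0 < d := by omega
  obtain ⟨e, hedef, hei, hej⟩ :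
      ∃ e : Bool → Bool → (Fin d → Bool),
        (∀ a b, Function.update (Function.update w i a) j b = e a b) ∧
        (∀ a b, e a b i = a) ∧ (∀ a b, e a b j = b) := by
    refine ⟨fun a b => Function.update (Function.update w i a) j b, fun _ _ => rfl, ?_, ?_⟩
    · intro a b
      show Function.update (Function.update w i a) j b i = a
      rw [Function.update_of_ne hij, Function.update_self]
    · intro a b
      show Function.update (Function.update w i a) j b j = b
      rw [Function.update_self]
  rw [hedef, hedef, hedef, hedef] at hTrain
  have hne : ∀ a b a' b' : Bool, (a ≠ a' ∨ b ≠ b') → e a b ≠ e a' b' := by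
    intro a b a' b' h hEq
    rcases h with h | h
    · exact h (by rw [← hei a b, hEq, hei])
    · exact h (by rw [← hej a b, hEq, hej])
  -- Good as an explicit finset
  have hGood2 : Good = {e false false, e true true} := by
    rw [hGood, hTrain]
    ext v
    simp only [Finset.mem_filter, Finset.mem_insert, Finset.mem_singleton]
    constructor
    · rintro ⟨(rfl | rfl | rfl | rfl), hv⟩ <;> simp [hei, hej] at hv ⊢
    · rintro (rfl | rfl) <;> simp [hei, hej]
  -- filters of Train on i and j
  have hAi : Train.filter (fun v => v i = false) = {e false false, e false true} := by
    rw [hTrain]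
    simp [Finset.filter_insert, Finset.filter_singleton, hei]
  have hBi : Train.filter (fun v => v i = true) = {e true false, e true true} := by
    rw [hTrain]
    simp [Finset.filter_insert, Finset.filter_singleton, hei]
  have hAj : Train.filter (fun v => v j = false) = {e false false, e true false} := by
    rw [hTrain]
    simp [Finset.filter_insert, Finset.filter_singleton, hej]
  have hBj : Train.filter (fun v => v j = true) = {e false true, e true true} := by
    rw [hTrain]
    simp [Finset.filter_insert, Finset.filter_singleton, hej]
  -- second-level filters
  have hAiAj : ({e false false, e false true} : Finset (Fin d → Bool)).filter
      (fun v => v j = false) = {e false false} := by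
    simp [Finset.filter_insert, Finset.filter_singleton, hej]
  have hAiBj : ({e false false, e false true} : Finset (Fin d → Bool)).filter
      (fun v => v j = true) = {e false true} := by
    simp [Finset.filter_insert, Finset.filter_singleton, hej]
  have hBiAj : ({e true false, e true true} : Finset (Fin d → Bool)).filter
      (fun v => v j = false) = {e true false} := by
    simp [Finset.filter_insert, Finset.filter_singleton, hej]
  have hBiBj : ({e true false, e true true} : Finset (Fin d → Bool)).filter
      (fun v => v j = true) = {e true true} := by
    simp [Finset.filter_insert, Finset.filter_singleton, hej]
  have hAjAi : ({e false false, e true false} : Finset (Fin d → Bool)).filter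
      (fun v => v i = false) = {e false false} := by
    simp [Finset.filter_insert, Finset.filter_singleton, hei]
  have hAjBi : ({e false false, e true false} : Finset (Fin d → Bool)).filter
      (fun v => v i = true) = {e true false} := by
    simp [Finset.filter_insert, Finset.filter_singleton, hei]
  have hBjAi : ({e false true, e true true} : Finset (Fin d → Bool)).filter
      (fun v => v i = false) = {e false true} := by
    simp [Finset.filter_insert, Finset.filter_singleton, hei]
  have hBjBi : ({e false true, e true true} : Finset (Fin d → Bool)).filter
      (fun v => v i = true) = {e true true} := by
    simp [Finset.filter_insert, Finset.filter_singleton, hei]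
  -- cards
  have hTcard : Train.card = 4 := by
    rw [hTrain]
    rw [Finset.card_insert_of_notMem (by
      simp only [Finset.mem_insert, Finset.mem_singleton]
      push_neg
      exact ⟨hne _ _ _ _ (Or.inr (by simp)), hne _ _ _ _ (Or.inl (by simp)),
        hne _ _ _ _ (Or.inl (by simp))⟩)]
    rw [Finset.card_insert_of_notMem (by
      simp only [Finset.mem_insert, Finset.mem_singleton]
      push_neg
      exact ⟨hne _ _ _ _ (Or.inl (by simp)), hne _ _ _ _ (Or.inl (by simp))⟩)]
    rw [Finset.card_insert_of_notMem (by
      simp only [Finset.mem_singleton]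
      exact hne _ _ _ _ (Or.inr (by simp)))]
    rfl
  have hpaircard : ∀ a b a' b' : Bool, (a ≠ a' ∨ b ≠ b') →
      ({e a b, e a' b'} : Finset (Fin d → Bool)).card = 2 := by
    intro a b a' b' h
    rw [Finset.card_insert_of_notMem (by simpa using hne _ _ _ _ h)]
    rfl
  -- intersections with Good
  have hTG : Train ∩ Good = {e false false, e true true} := by
    rw [← hGood2]
    exact Finset.inter_eq_right.mpr (hGood ▸ Finset.filter_subset _ _)
  have hTGcard : (Train ∩ Good).card = 2 := by
    rw [hTG]; exact hpaircard _ _ _ _ (Or.inl (by simp))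
  have hinter : ∀ a b : Bool, ({e a b} : Finset (Fin d → Bool)) ∩ Good =
      if a = b then {e a b} else ∅ := by
    intro a b
    rw [hGood2]
    rcases a with _ | _ <;> rcases b with _ | _
    · rw [if_pos rfl]
      exact Finset.singleton_inter_of_mem (by simp)
    · rw [if_neg (by simp)]
      refine Finset.singleton_inter_of_notMem ?_
      simp only [Finset.mem_insert, Finset.mem_singleton]
      push_neg
      exact ⟨hne _ _ _ _ (Or.inr (by simp)), hne _ _ _ _ (Or.inl (by simp))⟩
    · rw [if_neg (by simp)]
      refine Finset.singleton_inter_of_notMem ?_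
      simp only [Finset.mem_insert, Finset.mem_singleton]
      push_neg
      exact ⟨hne _ _ _ _ (Or.inl (by simp)), hne _ _ _ _ (Or.inr (by simp))⟩
    · rw [if_pos rfl]
      exact Finset.singleton_inter_of_mem (by simp)
  have hpairinter : ∀ a b a' b' : Bool, a = b → ¬ (a' = b') →
      ({e a b, e a' b'} : Finset (Fin d → Bool)) ∩ Good = {e a b} := by
    intro a b a' b' hab hab'
    have h1 : e a b ∈ Good := by
      rw [hGood2]
      rcases a with _ | _ <;> rcases b with _ | _
      · exact Finset.mem_insert_self _ _
      · exact absurd hab (by simp)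
      · exact absurd hab (by simp)
      · exact Finset.mem_insert_of_mem (Finset.mem_singleton_self _)
    have h2 : e a' b' ∉ Good := by
      rw [hGood2]
      simp only [Finset.mem_insert, Finset.mem_singleton]
      push_neg
      rcases a' with _ | _ <;> rcases b' with _ | _
      · exact absurd rfl hab'
      · exact ⟨hne _ _ _ _ (Or.inr (by simp)), hne _ _ _ _ (Or.inl (by simp))⟩
      · exact ⟨hne _ _ _ _ (Or.inl (by simp)), hne _ _ _ _ (Or.inr (by simp))⟩
      · exact absurd rfl hab'
    rw [Finset.insert_inter_of_mem h1, Finset.singleton_inter_of_notMem h2]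
    simp
  -- entropy of singletons is 0
  have hentsingle : ∀ a b : Bool, entH Good {e a b} = 0 := by
    intro a b
    by_cases hab : a = b
    · apply entH_inter_self
      · rw [hinter, if_pos hab]
      · simp
    · apply entH_inter_empty
      rw [hinter, if_neg hab]
  -- entropy of Train
  have hentT : entH Good Train = Real.log 2 := by
    apply entH_half
    rw [hTGcard, hTcard]
    norm_num
  -- entropy of the four two-element filters is log 2
  have hentpair : ∀ a b a' b' : Bool, a = b → ¬ (a' = b') →
      entH Good {e a b, e a' b'} = Real.log 2 := by
    intro a b a' b' hab hab'
    apply entH_half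
    rw [hpairinter a b a' b' hab hab', Finset.card_singleton,
      hpaircard _ _ _ _ (by
        by_contra hcon
        push_neg at hcon
        exact hab' (by rw [← hcon.1, ← hcon.2, hab]))]
    norm_num
  have hentAi : entH Good {e false false, e false true} = Real.log 2 :=
    hentpair _ _ _ _ rfl (by simp)
  have hentBi : entH Good {e true false, e true true} = Real.log 2 := by
    have : ({e true false, e true true} : Finset (Fin d → Bool)) = {e true true, e true false} := by
      rw [Finset.pair_comm]
    rw [this]; exact hentpair _ _ _ _ rfl (by simp)
  have hentAj : entH Good {e false false, e true false} = Real.log 2 :=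
    hentpair _ _ _ _ rfl (by simp)
  have hentBj : entH Good {e false true, e true true} = Real.log 2 := by
    have : ({e false true, e true true} : Finset (Fin d → Bool)) = {e true true, e false true} := by
      rw [Finset.pair_comm]
    rw [this]; exact hentpair _ _ _ _ rfl (by simp)
  -- WE 0 on singletons vanishes
  have hWE0 : ∀ (a b : Bool) (x : Fin d), WE Good 0 {e a b} x = 0 := by
    intro a b x
    rw [WE, hentsingle, mul_zero]
  -- WE 2 Train i = 0
  have hWE2i : WE Good 2 Train i = 0 := by
    refine le_antisymm ?_ (WE_nonneg hdpos Good 2 Train i)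
    calc WE Good 2 Train i
        ≤ WE Good 1 (Train.filter fun v => v i = false) j +
          WE Good 1 (Train.filter fun v => v i = true) j := WE_le hdpos Good 1 Train i j j
      _ ≤ (WE Good 0 (({e false false, e false true} : Finset (Fin d → Bool)).filter
              (fun v => v j = false)) j +
           WE Good 0 (({e false false, e false true} : Finset (Fin d → Bool)).filter
              (fun v => v j = true)) j) +
          (WE Good 0 (({e true false, e true true} : Finset (Fin d → Bool)).filter
              (fun v => v j = false)) j +
           WE Good 0 (({e true false, e true true} : Finset (Fin d → Bool)).filter
              (fun v => v j = true)) j) := by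
            rw [hAi, hBi]
            exact add_le_add (WE_le hdpos Good 0 _ j j j) (WE_le hdpos Good 0 _ j j j)
      _ = 0 := by
            rw [hAiAj, hAiBj, hBiAj, hBiBj, hWE0, hWE0, hWE0, hWE0]; ring
  have hWE2j : WE Good 2 Train j = 0 := by
    refine le_antisymm ?_ (WE_nonneg hdpos Good 2 Train j)
    calc WE Good 2 Train j
        ≤ WE Good 1 (Train.filter fun v => v j = false) i +
          WE Good 1 (Train.filter fun v => v j = true) i := WE_le hdpos Good 1 Train j i i
      _ ≤ (WE Good 0 (({e false false, e true false} : Finset (Fin d → Bool)).filter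
              (fun v => v i = false)) i +
           WE Good 0 (({e false false, e true false} : Finset (Fin d → Bool)).filter
              (fun v => v i = true)) i) +
          (WE Good 0 (({e false true, e true true} : Finset (Fin d → Bool)).filter
              (fun v => v i = false)) i +
           WE Good 0 (({e false true, e true true} : Finset (Fin d → Bool)).filter
              (fun v => v i = true)) i) := by
            rw [hAj, hBj]
            exact add_le_add (WE_le hdpos Good 0 _ i i i) (WE_le hdpos Good 0 _ i i i)
      _ = 0 := by
            rw [hAjAi, hAjBi, hBjAi, hBjBi, hWE0, hWE0, hWE0, hWE0]; ring
  have hIGki : IGk Good 2 Train i = entH Good Train := by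
    rw [IGk, hWE2i, zero_div, sub_zero]
  have hIGkj : IGk Good 2 Train j = entH Good Train := by
    rw [IGk, hWE2j, zero_div, sub_zero]
  have hlog2pos : (0:ℝ) < Real.log 2 := Real.log_pos (by norm_num)
  refine ⟨?_, ?_, ?_, hIGki, hIGkj, hentT⟩
  · -- all one-step IGs are zero
    intro x
    by_cases hxi : x = i
    · subst hxi
      rw [IG, hAi, hBi, hentAi, hentBi, hentT, hTcard,
        hpaircard _ _ _ _ (Or.inr (by simp)), hpaircard _ _ _ _ (Or.inr (by simp))]
      norm_num
      ring
    by_cases hxj : x = j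
    · subst hxj
      rw [IG, hAj, hBj, hentAj, hentBj, hentT, hTcard,
        hpaircard _ _ _ _ (Or.inl (by simp)), hpaircard _ _ _ _ (Or.inl (by simp))]
      norm_num
      ring
    · -- x is neither i nor j : every element of Train has v x = w x
      have hex : ∀ a b : Bool, e a b x = w x := by
        intro a b
        rw [← hedef, Function.update_of_ne hxj, Function.update_of_ne hxi]
      have hmemx : ∀ v ∈ Train, v x = w x := by
        rw [hTrain]
        intro v hv
        simp only [Finset.mem_insert, Finset.mem_singleton] at hv
        rcases hv with rfl | rfl | rfl | rfl <;> exact hex _ _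
      have hfilterT : Train.filter (fun v => v x = w x) = Train :=
        Finset.filter_true_of_mem hmemx
      have hfilterE : Train.filter (fun v => v x = !(w x)) = ∅ := by
        apply Finset.filter_false_of_mem
        intro v hv
        rw [hmemx v hv]
        simp
      rcases hwx : w x with _ | _
      · rw [hwx] at hfilterT hfilterE
        have hE' : Train.filter (fun v => v x = true) = ∅ := by simpa using hfilterE
        rw [IG, hfilterT, hE', hTcard]
        simp [entH]
      · rw [hwx] at hfilterT hfilterE
        have hE' : Train.filter (fun v => v x = false) = ∅ := by simpa using hfilterE
        rw [IG, hfilterT, hE', hTcard]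
        simp [entH]
  · rw [hIGki, hentT]; exact hlog2pos
  · rw [hIGkj, hentT]; exact hlog2pos
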